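/- arXiv:1702.04551 — 2 statements merged into one kernel-verified Lean document; each statement's English description precedes it below -/
import Mathlib

section
/- Let Γ : Set X → Set X be a derivability operator, and let f (of length β) and g (of length γ) be two safe natural inductions of Γ from the same structure S. Then for all ordinals i ≤ β and j ≤ γ: if i+1 ≤ β then the structure f (i+1) ∪ g j is safely derivable from f i ∪ g j, and if j+1 ≤ γ then the structure f i ∪ g (j+1) is safely derivable from f i ∪ g j. -/
universe u

variable {X : Type u}

/-- A natural induction of derivability operator `Γ` from structure `B` of length `β`. -/
def IsNatInd (Γ : Set X → Set X) (B : Set X) (β : Ordinal.{u}) (f : Ordinal.{u} → Set X) : Prop :=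
  f 0 = B ∧
  (∀ α : Ordinal.{u}, α + 1 ≤ β → f α ⊆ f (α + 1) ∧ f (α + 1) \ f α ⊆ Γ (f α)) ∧
  ∀ lam : Ordinal.{u}, lam ≤ β → Order.IsSuccLimit lam → f lam = ⋃ α < lam, f α

/-- `S` is saturated (closed) under `Γ`. -/
def Saturated (Γ : Set X → Set X) (S : Set X) : Prop := Γ S ⊆ S

/-- `S` is saturated on the set `T` of atoms. -/
def SaturatedOn (Γ : Set X → Set X) (S T : Set X) : Prop := Γ S ∩ T ⊆ S

/-- The set of atoms safely derivable from `S`. -/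
def SafeSet (Γ : Set X → Set X) (S : Set X) : Set X :=
  {A | A ∈ Γ S ∧ ∀ (β : Ordinal.{u}) (g : Ordinal.{u} → Set X), IsNatInd Γ S β g → A ∈ Γ (g β)}

/-- The set of atoms strictly underivable from `S`. -/
def UnderivSet (Γ : Set X → Set X) (S : Set X) : Set X :=
  {A | ∀ (β : Ordinal.{u}) (g : Ordinal.{u} → Set X), IsNatInd Γ S β g → A ∉ Γ (g β)}

/-- The structure `T` is safely derivable from the structure `S`. -/
def SafeStep (Γ : Set X → Set X) (S T : Set X) : Prop := S ⊆ T ∧ T ⊆ S ∪ SafeSet Γ S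

/-- A safe natural induction. -/
def IsSafeInd (Γ : Set X → Set X) (B : Set X) (β : Ordinal.{u}) (f : Ordinal.{u} → Set X) : Prop :=
  IsNatInd Γ B β f ∧ ∀ α : Ordinal.{u}, α + 1 ≤ β → SafeStep Γ (f α) (f (α + 1))

/-- A safe-terminal natural induction. -/
def IsSafeTermInd (Γ : Set X → Set X) (B : Set X) (β : Ordinal.{u}) (f : Ordinal.{u} → Set X) : Prop :=
  IsSafeInd Γ B β f ∧ SafeSet Γ (f β) ⊆ f β

/-- `A ≺_∝ B` iff `A ∝ B` and not `B ∝ A`. -/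
def Prec (r : X → X → Prop) (A B : X) : Prop := r A B ∧ ¬ r B A

/-- `r` is a dependency relation of `Γ`. -/
def IsDep (Γ : Set X → Set X) (r : X → X → Prop) : Prop :=
  ∀ (A : X) (S T : Set X), S ∩ {B | r B A} = T ∩ {B | r B A} → (A ∈ Γ S ↔ A ∈ Γ T)

/-- `r` is a monotone dependency relation of `Γ`. -/
def IsMonDep (Γ : Set X → Set X) (r : X → X → Prop) : Prop :=
  ∀ (A : X) (S T : Set X), S ∩ {B | Prec r B A} = T ∩ {B | Prec r B A} →
    S ∩ {B | r B A} ⊆ T ∩ {B | r B A} → A ∈ Γ S → A ∈ Γ T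

/-- `r` monotonically orders `Γ`. -/
def MonOrders (Γ : Set X → Set X) (r : X → X → Prop) : Prop :=
  Transitive r ∧ WellFounded (Prec r) ∧ IsMonDep Γ r

/-- `r` strictly orders `Γ`. -/
def StrictOrders (Γ : Set X → Set X) (r : X → X → Prop) : Prop :=
  Transitive r ∧ Irreflexive r ∧ WellFounded r ∧ IsDep Γ r

/-- The natural induction `f` respects the relation `s`: an atom `A` may be derived at stage `α`
only if `f α` is saturated on `{B | s B A}`. -/
def Respects (Γ : Set X → Set X) (β : Ordinal.{u}) (f : Ordinal.{u} → Set X)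
    (s : X → X → Prop) : Prop :=
  ∀ α : Ordinal.{u}, α + 1 ≤ β → ∀ A ∈ f (α + 1) \ f α, SaturatedOn Γ (f α) {B | s B A}

section Aux

variable {Γ : Set X → Set X}

/-- Natural inductions are monotone in the stage. -/
lemma natInd_mono {B : Set X} {β : Ordinal.{u}} {f : Ordinal.{u} → Set X}
    (hf : IsNatInd Γ B β f) : ∀ b ≤ β, ∀ a ≤ b, f a ⊆ f b := by
  intro b
  induction b using Ordinal.induction with
  | h b IH =>
    intro hbβ a hab
    rcases Ordinal.zero_or_succ_or_isSuccLimit b with h0 | ⟨c, hc⟩ | hlim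
    · subst h0
      rw [nonpos_iff_eq_zero.mp hab]
    · subst hc
      rcases lt_or_eq_of_le hab with hlt | rfl
      · have hac : a ≤ c := Order.lt_succ_iff.mp hlt
        have hstep := (hf.2.1 c (by rwa [Ordinal.add_one_eq_succ])).1
        rw [Ordinal.add_one_eq_succ] at hstep
        exact (IH c (Order.lt_succ c) (le_trans (le_of_lt (Order.lt_succ c)) hbβ) a hac).trans hstep
      · exact subset_rfl
    · rcases lt_or_eq_of_le hab with hlt | rfl
      · rw [hf.2.2 b hbβ hlim]
        exact Set.subset_biUnion_of_mem hlt
      · exact subset_rfl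

/-- Concatenation of two natural inductions. -/
noncomputable def concatSeq (j : Ordinal.{u}) (k h : Ordinal.{u} → Set X) :
    Ordinal.{u} → Set X :=
  fun α => if α < j then k α else h (α - j)

lemma concatSeq_left {C : Set X} {δ : Ordinal.{u}} {j : Ordinal.{u}} {k h : Ordinal.{u} → Set X}
    (hh : IsNatInd Γ C δ h) (hC : k j = C) {α : Ordinal.{u}} (hα : α ≤ j) :
    concatSeq j k h α = k α := by
  rcases lt_or_eq_of_le hα with hlt | rfl
  · simp [concatSeq, hlt]
  · simp [concatSeq, Ordinal.sub_self, hh.1, hC]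

lemma concatSeq_right {j : Ordinal.{u}} {k h : Ordinal.{u} → Set X}
    {α : Ordinal.{u}} (hα : j ≤ α) :
    concatSeq j k h α = h (α - j) := by
  rcases lt_or_eq_of_le hα with hlt | rfl
  · simp [concatSeq, not_lt_of_ge (le_of_lt hlt)]
  · simp [concatSeq]

lemma natInd_concat {B C : Set X} {j δ : Ordinal.{u}} {k h : Ordinal.{u} → Set X}
    (hk : IsNatInd Γ B j k) (hh : IsNatInd Γ C δ h) (hC : k j = C) :
    IsNatInd Γ B (j + δ) (concatSeq j k h) ∧ concatSeq j k h (j + δ) = h δ := by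
  have hval : concatSeq j k h (j + δ) = h δ := by
    rw [concatSeq_right (le_self_add : j ≤ j + δ), Ordinal.add_sub_cancel]
  refine ⟨⟨?_, ?_, ?_⟩, hval⟩
  · rw [concatSeq_left hh hC (zero_le : 0 ≤ j), hk.1]
  · intro α hα1
    rcases le_or_gt (α + 1) j with hle | hgt
    · have hαj : α ≤ j := le_trans (le_self_add) hle
      rw [concatSeq_left hh hC hαj, concatSeq_left hh hC hle]
      exact hk.2.1 α hle
    · have hjα : j ≤ α := by
        rw [Ordinal.add_one_eq_succ] at hgt
        exact Order.lt_succ_iff.mp hgt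
      rw [concatSeq_right hjα, concatSeq_right (le_trans hjα (le_self_add))]
      have key : α + 1 - j = (α - j) + 1 := by
        have h1 : j + (α - j) = α := Ordinal.add_sub_cancel_of_le hjα
        have : j + ((α - j) + 1) = α + 1 := by rw [← add_assoc, h1]
        rw [← this, Ordinal.add_sub_cancel]
      rw [key]
      apply hh.2.1 (α - j)
      rw [← add_le_add_iff_left j, ← add_assoc, Ordinal.add_sub_cancel_of_le hjα]
      exact hα1
  · intro lam hlam hlim
    rcases le_or_gt lam j with hle | hgt
    · rw [concatSeq_left hh hC hle, hk.2.2 lam hle hlim]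
      ext x
      simp only [Set.mem_iUnion]
      constructor
      · rintro ⟨α, hα, hx⟩
        exact ⟨α, hα, by rw [concatSeq_left hh hC (le_trans (le_of_lt hα) hle)]; exact hx⟩
      · rintro ⟨α, hα, hx⟩
        rw [concatSeq_left hh hC (le_trans (le_of_lt hα) hle)] at hx
        exact ⟨α, hα, hx⟩
    · have hjlam : j ≤ lam := le_of_lt hgt
      rw [concatSeq_right hjlam]
      have hsplit : j + (lam - j) = lam := Ordinal.add_sub_cancel_of_le hjlam
      have hne : lam - j ≠ 0 := by
        intro h0
        rw [h0, add_zero] at hsplit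
        exact (ne_of_lt hgt) hsplit
      have hlim' : Order.IsSuccLimit (lam - j) := by
        rcases Ordinal.zero_or_succ_or_isSuccLimit (lam - j) with h0 | ⟨c, hc⟩ | hl
        · exact absurd h0 hne
        · exfalso
          rw [← hc, Ordinal.add_succ] at hsplit
          exact (Order.not_isSuccLimit_succ _) (hsplit ▸ hlim)
        · exact hl
      have hsub : lam - j ≤ δ := Ordinal.sub_le.mpr hlam
      rw [hh.2.2 (lam - j) hsub hlim']
      ext x
      simp only [Set.mem_iUnion]
      constructor
      · rintro ⟨α, hα, hx⟩
        refine ⟨j + α, ?_, ?_⟩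
        · rw [← hsplit]; exact (add_lt_add_iff_left j).mpr hα
        · rw [concatSeq_right (le_self_add : j ≤ j + α), Ordinal.add_sub_cancel]
          exact hx
      · rintro ⟨α, hα, hx⟩
        rcases le_or_gt α j with hαj | hjα
        · rw [concatSeq_left hh hC hαj] at hx
          refine ⟨0, hlim'.pos, ?_⟩
          rw [hh.1, ← hC]
          exact natInd_mono hk j le_rfl α hαj hx
        · rw [concatSeq_right (le_of_lt hjα)] at hx
          refine ⟨α - j, ?_, hx⟩
          have : j + (α - j) < j + (lam - j) := by
            rw [Ordinal.add_sub_cancel_of_le (le_of_lt hjα), hsplit]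
            exact hα
          exact (add_lt_add_iff_left j).mp this

/-- The grid lemma: for two safe inductions from the same base, the rows and columns
of the grid `(i, j) ↦ f i ∪ g j` are natural inductions. -/
lemma gridInd {S : Set X} {β γ : Ordinal.{u}} {f g : Ordinal.{u} → Set X}
    (hf : IsSafeInd Γ S β f) (hg : IsSafeInd Γ S γ g) :
    ∀ i ≤ β, ∀ j ≤ γ,
      IsNatInd Γ (g j) i (fun α => f α ∪ g j) ∧
      IsNatInd Γ (f i) j (fun α => f i ∪ g α) := by
  intro i
  induction i using Ordinal.induction with
  | h i IH1 =>
    intro hiβ j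
    induction j using Ordinal.induction with
    | h j IH2 =>
      intro hjγ
      constructor
      · -- column: α ↦ f α ∪ g j is a natural induction from g j of length i
        refine ⟨?_, ?_, ?_⟩
        · show f 0 ∪ g j = g j
          rw [hf.1.1]
          exact Set.union_eq_self_of_subset_left (by rw [← hg.1.1]; exact natInd_mono hg.1 j hjγ 0 (zero_le : 0 ≤ j))
        · intro α hα1
          have hα1β : α + 1 ≤ β := le_trans hα1 hiβ
          constructor
          · exact Set.union_subset_union_left _ (hf.1.2.1 α hα1β).1
          · intro A hA
            have hAf : A ∈ f (α + 1) := by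
              rcases hA.1 with h | h
              · exact h
              · exact absurd (Or.inr h) hA.2
            have hAnf : A ∉ f α := fun h => hA.2 (Or.inl h)
            have hAsafe : A ∈ SafeSet Γ (f α) := by
              rcases (hf.2 α hα1β).2 hAf with h | h
              · exact absurd h hAnf
              · exact h
            have hrow : IsNatInd Γ (f α) j (fun δ => f α ∪ g δ) :=
              (IH1 α (lt_of_lt_of_le (Order.lt_succ α) (by rwa [← Ordinal.add_one_eq_succ]))
                (le_trans (le_trans (le_self_add) hα1) hiβ) j hjγ).2
            exact hAsafe.2 j (fun δ => f α ∪ g δ) hrow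
        · intro lam hlam hlim
          show f lam ∪ g j = ⋃ α < lam, (f α ∪ g j)
          rw [hf.1.2.2 lam (le_trans hlam hiβ) hlim]
          ext x
          simp only [Set.mem_iUnion, Set.mem_union]
          constructor
          · rintro (⟨α, hα, hx⟩ | hx)
            · exact ⟨α, hα, Or.inl hx⟩
            · exact ⟨0, hlim.pos, Or.inr hx⟩
          · rintro ⟨α, hα, hx | hx⟩
            · exact Or.inl ⟨α, hα, hx⟩
            · exact Or.inr hx
      · -- row: α ↦ f i ∪ g α is a natural induction from f i of length j
        refine ⟨?_, ?_, ?_⟩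
        · show f i ∪ g 0 = f i
          rw [hg.1.1]
          exact Set.union_eq_self_of_subset_right (by rw [← hf.1.1]; exact natInd_mono hf.1 i hiβ 0 (zero_le : 0 ≤ i))
        · intro α hα1
          have hα1γ : α + 1 ≤ γ := le_trans hα1 hjγ
          constructor
          · exact Set.union_subset_union_right _ (hg.1.2.1 α hα1γ).1
          · intro A hA
            have hAg : A ∈ g (α + 1) := by
              rcases hA.1 with h | h
              · exact absurd (Or.inl h) hA.2
              · exact h
            have hAng : A ∉ g α := fun h => hA.2 (Or.inr h)
            have hAsafe : A ∈ SafeSet Γ (g α) := by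
              rcases (hg.2 α hα1γ).2 hAg with h | h
              · exact absurd h hAng
              · exact h
            have hcol : IsNatInd Γ (g α) i (fun δ => f δ ∪ g α) :=
              (IH2 α (lt_of_lt_of_le (Order.lt_succ α) (by rwa [← Ordinal.add_one_eq_succ]))
                (le_trans (le_trans (le_self_add) hα1) hjγ)).1
            exact hAsafe.2 i (fun δ => f δ ∪ g α) hcol
        · intro lam hlam hlim
          show f i ∪ g lam = ⋃ α < lam, (f i ∪ g α)
          rw [hg.1.2.2 lam (le_trans hlam hjγ) hlim]
          ext x
          simp only [Set.mem_iUnion, Set.mem_union]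
          constructor
          · rintro (hx | ⟨α, hα, hx⟩)
            · exact ⟨0, hlim.pos, Or.inl hx⟩
            · exact ⟨α, hα, Or.inr hx⟩
          · rintro ⟨α, hα, hx | hx⟩
            · exact Or.inl hx
            · exact Or.inr ⟨α, hα, hx⟩

end Aux

/-- for two safe natural inductions `f`, `g` from the same structure, each step
of either one is safe relative to the union of the current stages. -/
theorem stmt10 (Γ : Set X → Set X) (S : Set X) (β γ : Ordinal.{u})
    (f g : Ordinal.{u} → Set X)
    (hf : IsSafeInd Γ S β f) (hg : IsSafeInd Γ S γ g) :
    ∀ i ≤ β, ∀ j ≤ γ,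
      (i + 1 ≤ β → SafeStep Γ (f i ∪ g j) (f (i + 1) ∪ g j)) ∧
      (j + 1 ≤ γ → SafeStep Γ (f i ∪ g j) (f i ∪ g (j + 1))) := by
  intro i hiβ j hjγ
  have grid := gridInd hf hg
  constructor
  · intro hi1
    refine ⟨Set.union_subset_union_left _ (hf.1.2.1 i hi1).1, ?_⟩
    intro A hA
    rcases hA with hA | hA
    · -- A ∈ f (i+1)
      by_cases hAf : A ∈ f i
      · exact Or.inl (Or.inl hAf)
      by_cases hAg : A ∈ g j
      · exact Or.inl (Or.inr hAg)
      have hAsafe : A ∈ SafeSet Γ (f i) := by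
        rcases (hf.2 i hi1).2 hA with h | h
        · exact absurd h hAf
        · exact h
      right
      have hrow : IsNatInd Γ (f i) j (fun α => f i ∪ g α) := (grid i hiβ j hjγ).2
      refine ⟨hAsafe.2 j (fun α => f i ∪ g α) hrow, ?_⟩
      intro δ h hh
      obtain ⟨hc, hval⟩ := natInd_concat hrow hh rfl
      have := hAsafe.2 (j + δ) (concatSeq j (fun α => f i ∪ g α) h) hc
      rwa [hval] at this
    · exact Or.inl (Or.inr hA)
  · intro hj1
    refine ⟨Set.union_subset_union_right _ (hg.1.2.1 j hj1).1, ?_⟩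
    intro A hA
    rcases hA with hA | hA
    · exact Or.inl (Or.inl hA)
    · -- A ∈ g (j+1)
      by_cases hAg : A ∈ g j
      · exact Or.inl (Or.inr hAg)
      by_cases hAf : A ∈ f i
      · exact Or.inl (Or.inl hAf)
      have hAsafe : A ∈ SafeSet Γ (g j) := by
        rcases (hg.2 j hj1).2 hA with h | h
        · exact absurd h hAg
        · exact h
      right
      have hcol : IsNatInd Γ (g j) i (fun α => f α ∪ g j) := (grid i hiβ j hjγ).1
      refine ⟨hAsafe.2 i (fun α => f α ∪ g j) hcol, ?_⟩
      intro δ h hh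
      obtain ⟨hc, hval⟩ := natInd_concat hcol hh rfl
      have := hAsafe.2 (i + δ) (concatSeq i (fun α => f α ∪ g j) h) hc
      rwa [hval] at this
end

section
/- Let Γ : Set X → Set X be a derivability operator and suppose the binary relation ≺ strictly orders Γ. Then Γ has exactly one fixpoint, and a structure 𝔄 is the limit of a terminal natural induction of Γ from ∅ respecting ≺ if and only if 𝔄 is a fixpoint of Γ. -/
universe u

variable {X : Type u}

section Aux19

variable {Γ : Set X → Set X} {r : X → X → Prop}

/-- Recursion step for the canonical fixpoint. -/
def fixStep (Γ : Set X → Set X) (r : X → X → Prop) :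
    (A : X) → ((B : X) → r B A → Prop) → Prop :=
  fun A ih => A ∈ Γ {B | ∃ h : r B A, ih B h}

/-- The canonical fixpoint defined by well-founded recursion. -/
noncomputable def theFix (Γ : Set X → Set X) (r : X → X → Prop) (hwf : WellFounded r) :
    Set X :=
  {A | hwf.fix (fixStep Γ r) A}

theorem theFix_mem (hwf : WellFounded r) (A : X) :
    A ∈ theFix Γ r hwf ↔ A ∈ Γ {B | r B A ∧ B ∈ theFix Γ r hwf} := by
  have h1 : hwf.fix (fixStep Γ r) A
      = fixStep Γ r A (fun B _ => hwf.fix (fixStep Γ r) B) := WellFounded.fix_eq hwf _ A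
  show hwf.fix (fixStep Γ r) A ↔ _
  rw [h1]
  show A ∈ Γ {B | ∃ _h : r B A, hwf.fix (fixStep Γ r) B} ↔ _
  have hset : {B | ∃ _h : r B A, hwf.fix (fixStep Γ r) B}
      = {B | r B A ∧ B ∈ theFix Γ r hwf} := by
    ext B; exact exists_prop
  rw [hset]

theorem gamma_theFix (hwf : WellFounded r) (hdep : IsDep Γ r) :
    Γ (theFix Γ r hwf) = theFix Γ r hwf := by
  ext A
  rw [theFix_mem hwf A]
  refine hdep A _ _ ?_
  ext B
  simp only [Set.mem_inter_iff, Set.mem_setOf_eq]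
  tauto

theorem fix_unique (hwf : WellFounded r) (hdep : IsDep Γ r) {S T : Set X}
    (hS : Γ S = S) (hT : Γ T = T) : S = T := by
  ext A
  refine hwf.induction (C := fun A => (A ∈ S ↔ A ∈ T)) A ?_
  intro A ih
  have heq : S ∩ {B | r B A} = T ∩ {B | r B A} := by
    ext B
    simp only [Set.mem_inter_iff, Set.mem_setOf_eq]
    exact and_congr_left fun hBA => ih B hBA
  have h2 := hdep A S T heq
  rw [hS, hT] at h2
  exact h2

theorem natind_mono {B : Set X} {β : Ordinal.{u}} {f : Ordinal.{u} → Set X}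
    (h : IsNatInd Γ B β f) : ∀ γ ≤ β, ∀ α ≤ γ, f α ⊆ f γ := by
  intro γ
  induction γ using Ordinal.limitRecOn with
  | zero =>
    intro _ α hα
    rw [nonpos_iff_eq_zero.mp hα]
  | add_one δ ih =>
    intro hγβ α hα
    have hδ1 : δ < δ + 1 := by rw [Ordinal.add_one_eq_succ]; exact Order.lt_succ δ
    have hδβ : δ ≤ β := le_trans hδ1.le hγβ
    rcases lt_or_eq_of_le hα with hlt | heq
    · have hαδ : α ≤ δ := by rwa [Ordinal.add_one_eq_succ, Order.lt_succ_iff] at hlt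
      exact (ih hδβ α hαδ).trans (h.2.1 δ hγβ).1
    · rw [heq]
  | limit γ hγ ih =>
    intro hγβ α hα
    rcases lt_or_eq_of_le hα with hlt | heq
    · intro x hx
      rw [h.2.2 γ hγβ hγ]
      exact Set.mem_biUnion hlt hx
    · rw [heq]

theorem natind_enter {β : Ordinal.{u}} {f : Ordinal.{u} → Set X}
    (h : IsNatInd Γ ∅ β f) {A : X} (hA : A ∈ f β) :
    ∃ α : Ordinal.{u}, α + 1 ≤ β ∧ A ∈ f (α + 1) ∧ A ∉ f α := by
  set S : Set Ordinal.{u} := {γ | γ ≤ β ∧ A ∈ f γ} with hSdef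
  have hne : S.Nonempty := ⟨β, le_rfl, hA⟩
  set γ := Ordinal.lt_wf.min S hne with hγdef
  have hmem : γ ∈ S := Ordinal.lt_wf.min_mem S hne
  have hnotlt : ∀ x ∈ S, ¬ x < γ := fun x hx => Ordinal.lt_wf.not_lt_min S hx
  rcases Ordinal.zero_or_succ_or_isSuccLimit γ with h0 | ⟨δ, hδ⟩ | hlim
  · exfalso
    have := hmem.2
    rw [h0, h.1] at this
    exact this
  · refine ⟨δ, ?_, ?_, ?_⟩
    · rw [Ordinal.add_one_eq_succ, hδ]; exact hmem.1
    · rw [Ordinal.add_one_eq_succ, hδ]; exact hmem.2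
    · intro hAδ
      have hδγ : δ < γ := by rw [← hδ]; exact Order.lt_succ δ
      exact hnotlt δ ⟨le_trans (le_of_lt hδγ) hmem.1, hAδ⟩ hδγ
  · exfalso
    have := hmem.2
    rw [h.2.2 γ hmem.1 hlim] at this
    obtain ⟨α, hαγ, hAα⟩ := Set.mem_iUnion₂.mp this
    exact hnotlt α ⟨le_trans (le_of_lt hαγ) hmem.1, hAα⟩ hαγ

theorem limit_eq_theFix (ht : Transitive r) (hwf : WellFounded r) (hdep : IsDep Γ r)
    {β : Ordinal.{u}} {f : Ordinal.{u} → Set X}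
    (hni : IsNatInd Γ ∅ β f) (hresp : Respects Γ β f r) (hsat : Saturated Γ (f β)) :
    f β = theFix Γ r hwf := by
  have mono := natind_mono hni
  ext A
  refine hwf.induction (C := fun A => (A ∈ f β ↔ A ∈ theFix Γ r hwf)) A ?_
  intro A ih
  constructor
  · intro hA
    obtain ⟨α, hα, hA1, hA0⟩ := natind_enter hni hA
    have hαβ : α ≤ β := le_trans (le_of_lt (by
      rw [Ordinal.add_one_eq_succ]; exact Order.lt_succ α)) hα
    have hsatA : SaturatedOn Γ (f α) {B | r B A} := hresp α hα A ⟨hA1, hA0⟩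
    have hAΓ : A ∈ Γ (f α) := (hni.2.1 α hα).2 ⟨hA1, hA0⟩
    have key : ∀ B, r B A → B ∈ theFix Γ r hwf → B ∈ f α := by
      intro B hBA hBfix
      refine hwf.induction
        (C := fun B => r B A → B ∈ theFix Γ r hwf → B ∈ f α) B ?_ hBA hBfix
      intro B ih2 hBA hBfix
      have hBΓ : B ∈ Γ (theFix Γ r hwf) := by
        rw [gamma_theFix hwf hdep]; exact hBfix
      have heq : theFix Γ r hwf ∩ {C | r C B} = f α ∩ {C | r C B} := by
        ext C
        simp only [Set.mem_inter_iff, Set.mem_setOf_eq]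
        constructor
        · rintro ⟨hCfix, hCB⟩
          exact ⟨ih2 C hCB (ht hCB hBA) hCfix, hCB⟩
        · rintro ⟨hCα, hCB⟩
          have hCβ : C ∈ f β := mono β le_rfl α hαβ hCα
          exact ⟨(ih C (ht hCB hBA)).mp hCβ, hCB⟩
      exact hsatA ⟨(hdep B _ _ heq).mp hBΓ, hBA⟩
    have heqA : f α ∩ {B | r B A} = theFix Γ r hwf ∩ {B | r B A} := by
      ext B
      simp only [Set.mem_inter_iff, Set.mem_setOf_eq]
      constructor
      · rintro ⟨hBα, hBA⟩
        exact ⟨(ih B hBA).mp (mono β le_rfl α hαβ hBα), hBA⟩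
      · rintro ⟨hBfix, hBA⟩
        exact ⟨key B hBA hBfix, hBA⟩
    rw [← gamma_theFix hwf hdep]
    exact (hdep A _ _ heqA).mp hAΓ
  · intro hA
    have hAΓ : A ∈ Γ (theFix Γ r hwf) := by
      rw [gamma_theFix hwf hdep]; exact hA
    have heq : theFix Γ r hwf ∩ {B | r B A} = f β ∩ {B | r B A} := by
      ext B
      simp only [Set.mem_inter_iff, Set.mem_setOf_eq]
      exact and_congr_left fun hBA => (ih B hBA).symm
    exact hsat ((hdep A _ _ heq).mp hAΓ)

theorem fix_has_ind (hwf : WellFounded r) (hdep : IsDep Γ r)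
    {𝔄 : Set X} (hfix : Γ 𝔄 = 𝔄) :
    ∃ (β : Ordinal.{u}) (f : Ordinal.{u} → Set X),
      IsNatInd Γ ∅ β f ∧ Respects Γ β f r ∧ Saturated Γ (f β) ∧ f β = 𝔄 := by
  haveI : IsWellFounded X r := ⟨hwf⟩
  set ρ : X → Ordinal.{u} := IsWellFounded.rank r with hρ
  have hρmono : ∀ {a b : X}, r a b → ρ a < ρ b := fun h => IsWellFounded.rank_lt_of_rel h
  set β := Ordinal.lsub.{u, u} ρ with hβ
  set f : Ordinal.{u} → Set X := fun α => 𝔄 ∩ {A | ρ A < α} with hf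
  have hfβ : f β = 𝔄 := by
    ext A
    simp only [hf, Set.mem_inter_iff, Set.mem_setOf_eq]
    exact ⟨fun h => h.1, fun h => ⟨h, Ordinal.lt_lsub ρ A⟩⟩
  have hstepA : ∀ (α : Ordinal.{u}) (A : X), A ∈ 𝔄 → ρ A ≤ α → A ∈ Γ (f α) := by
    intro α A hA𝔄 hrank
    have heq : 𝔄 ∩ {B | r B A} = f α ∩ {B | r B A} := by
      ext B
      simp only [hf, Set.mem_inter_iff, Set.mem_setOf_eq]
      constructor
      · rintro ⟨hB𝔄, hBA⟩
        exact ⟨⟨hB𝔄, lt_of_lt_of_le (hρmono hBA) hrank⟩, hBA⟩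
      · rintro ⟨⟨hB𝔄, _⟩, hBA⟩
        exact ⟨hB𝔄, hBA⟩
    have : A ∈ Γ 𝔄 := by rw [hfix]; exact hA𝔄
    exact (hdep A _ _ heq).mp this
  have hrank_succ : ∀ (α : Ordinal.{u}) (A : X), ρ A < α + 1 → ρ A ≤ α := by
    intro α A h
    rw [Ordinal.add_one_eq_succ, Order.lt_succ_iff] at h
    exact h
  refine ⟨β, f, ⟨?_, ?_, ?_⟩, ?_, ?_, hfβ⟩
  · ext A
    simp [hf, not_lt_zero']
  · intro α _
    constructor
    · rintro A ⟨hA𝔄, hrank⟩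
      have hle : α ≤ α + 1 := by
        rw [Ordinal.add_one_eq_succ]; exact (Order.lt_succ α).le
      exact ⟨hA𝔄, lt_of_lt_of_le hrank hle⟩
    · rintro A ⟨⟨hA𝔄, hrank1⟩, hA0⟩
      exact hstepA α A hA𝔄 (hrank_succ α A hrank1)
  · intro lam _ hlim
    ext A
    simp only [hf, Set.mem_inter_iff, Set.mem_setOf_eq, Set.mem_iUnion]
    constructor
    · rintro ⟨hA𝔄, hrank⟩
      exact ⟨ρ A + 1, by rw [Ordinal.add_one_eq_succ]; exact hlim.succ_lt hrank,
        hA𝔄, by rw [Ordinal.add_one_eq_succ]; exact Order.lt_succ (ρ A)⟩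
    · rintro ⟨α, hαlam, hA𝔄, hrank⟩
      exact ⟨hA𝔄, lt_trans hrank hαlam⟩
  · rintro α _ A ⟨⟨hA𝔄, hrank1⟩, hA0⟩
    rintro B ⟨hBΓ, hBA⟩
    have hrankB : ρ B < α := lt_of_lt_of_le (hρmono hBA) (hrank_succ α A hrank1)
    have heqB : f α ∩ {C | r C B} = 𝔄 ∩ {C | r C B} := by
      ext C
      simp only [hf, Set.mem_inter_iff, Set.mem_setOf_eq]
      constructor
      · rintro ⟨⟨hC𝔄, _⟩, hCB⟩
        exact ⟨hC𝔄, hCB⟩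
      · rintro ⟨hC𝔄, hCB⟩
        exact ⟨⟨hC𝔄, lt_trans (hρmono hCB) hrankB⟩, hCB⟩
    have hB𝔄 : B ∈ 𝔄 := by
      rw [← hfix]
      exact (hdep B _ _ heqB).mp hBΓ
    exact ⟨hB𝔄, hrankB⟩
  · show Γ (f β) ⊆ f β
    rw [hfβ, hfix]

end Aux19

/-- if `r` strictly orders `Γ`, then `Γ` has exactly one fixpoint, and a
structure is the limit of a terminal natural induction from `∅` respecting `r` iff it is a
fixpoint of `Γ`. -/
theorem stmt19 (Γ : Set X → Set X) (r : X → X → Prop) (hso : StrictOrders Γ r) :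
    (∃! S : Set X, Γ S = S) ∧
    ∀ 𝔄 : Set X,
      (∃ (β : Ordinal.{u}) (f : Ordinal.{u} → Set X),
          IsNatInd Γ ∅ β f ∧ Respects Γ β f r ∧ Saturated Γ (f β) ∧ f β = 𝔄) ↔
        Γ 𝔄 = 𝔄 := by
  obtain ⟨htrans, _hirr, hwf, hdep⟩ := hso
  constructor
  · exact ⟨theFix Γ r hwf, gamma_theFix hwf hdep,
      fun S hS => fix_unique hwf hdep hS (gamma_theFix hwf hdep)⟩
  · intro 𝔄
    constructor
    · rintro ⟨β, f, hni, hresp, hsat, rfl⟩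
      have h1 : f β = theFix Γ r hwf := limit_eq_theFix htrans hwf hdep hni hresp hsat
      rw [h1]
      exact gamma_theFix hwf hdep
    · intro hfix
      exact fix_has_ind hwf hdep hfix
end
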